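/- Let F be a field with char F ≠ 2 and char F ≠ 3, and let · be a bilinear multiplication on F × F that is not identically zero, is endo-commutative ((x·x)·(y·y) = (x·y)·(x·y) for all x, y) and is curled (for every x there exists λ ∈ F with x·x = λ • x). Then (F × F, ·) is isomorphic to exactly one of the following algebras, given by their matrices of structure constants: ((α1, 0, 0, 0), (0, 2α1−1, 1−α1, 0)) for some α1 ∈ F; or ((1/3, 0, 0, 0), (0, 2/3, −1/3, 0)). Here 'exactly one' means in addition that no two distinct algebras of this list (in particular for distinct values of α1) are isomorphic to each other. -/

import Mathlib

/-- The bilinear multiplication on `F × F` determined by the matrix of structure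
constants `((a1, a2, a3, a4), (b1, b2, b3, b4))`. -/
def scMul {F : Type*} [Field F] (a1 a2 a3 a4 b1 b2 b3 b4 : F) (x y : F × F) : F × F :=
  (a1 * x.1 * y.1 + a2 * x.1 * y.2 + a3 * x.2 * y.1 + a4 * x.2 * y.2,
   b1 * x.1 * y.1 + b2 * x.1 * y.2 + b3 * x.2 * y.1 + b4 * x.2 * y.2)

/-- A multiplication `m` on `F × F` is endo-commutative if `(x·x)·(y·y) = (x·y)·(x·y)`. -/
def IsEndoCommutative {F : Type*} [Field F] (m : F × F → F × F → F × F) : Prop :=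
  ∀ x y : F × F, m (m x x) (m y y) = m (m x y) (m x y)

/-- A multiplication `m` on `F × F` is curled if every square `x·x` is a scalar
multiple of `x`. -/
def IsCurled {F : Type*} [Field F] (m : F × F → F × F → F × F) : Prop :=
  ∀ x : F × F, ∃ lam : F, m x x = lam • x

/-- `m` is bilinear (linear in each argument). -/
def IsBilinearMul {F : Type*} [Field F] (m : F × F → F × F → F × F) : Prop :=
  (∀ (a : F) (x x' y : F × F), m (a • x + x') y = a • m x y + m x' y) ∧
  (∀ (a : F) (x y y' : F × F), m x (a • y + y') = a • m x y + m x y')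

/-- Two multiplications on `F × F` are isomorphic if some `F`-linear
equivalence `g` of `F × F` satisfies `g (x·y) = g x ∘ g y`. -/
def AlgIso {F : Type*} [Field F] (m₁ m₂ : F × F → F × F → F × F) : Prop :=
  ∃ g : (F × F) ≃ₗ[F] F × F, ∀ x y, g (m₁ x y) = m₂ (g x) (g y)

/-- The list of endo-commutative curled algebras (char F ≠ 2, 3):
`some a1` is `A₃(a1, 0, 2a1 - 1)` and `none` is `A₇(1/3, 0)`. -/
def ecCurledFamily {F : Type*} [Field F] : Option F → (F × F → F × F → F × F)
  | some a1 => scMul a1 0 0 0 0 (2 * a1 - 1) (1 - a1) 0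
  | none => scMul (1 / 3) 0 0 0 0 (2 / 3) (-(1 / 3)) 0

/-!
In characteristic `≠ 2` a bilinear multiplication on `F × F` is curled exactly when it is
`curledMul n v`, that is `x·y = [x, n] y + [y, n] x + [x, y] v` with `[x, y] = cross x y =
x₁ y₂ - x₂ y₁`; then `x·x = 2 [x, n] x`. The defect `(x·y)(x·y) - (x·x)(y·y)` equals
`2 [x, y] [v, n] (x·y)`, so endo-commutativity forces `v ∥ n`. A linear automorphism `g` is an
isomorphism onto the algebra of `(n', v')` iff `g n = det g • n'` and `g v = det g • v'`. Hence a
nonzero algebra of this kind has either `n = 0`, a single isomorphism class, or `v = t n` with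
`n ≠ 0`, and then the scalar `t` is a complete invariant. The family realises `n = 0` by `α₁ = 0`,
`t = 3` by the exceptional algebra and `t = 3 - 2 / α₁` by `α₁ ≠ 0`.
-/

section

variable {F : Type*} [Field F]

def cross (x y : F × F) : F := x.1 * y.2 - x.2 * y.1

lemma det_eq_cross (g : F × F →ₗ[F] F × F) :
    LinearMap.det g = cross (g (1, 0)) (g (0, 1)) := by
  rw [← LinearMap.det_toMatrix (Module.Basis.finTwoProd F), Matrix.det_fin_two]
  simp [LinearMap.toMatrix_apply, cross]
  ring

lemma prod_eq_smul_add_smul (x : F × F) : x = x.1 • (1, 0) + x.2 • (0, 1) := by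
  ext <;> simp

lemma cross_map_map (g : F × F →ₗ[F] F × F) (x y : F × F) :
    cross (g x) (g y) = LinearMap.det g * cross x y := by
  rw [det_eq_cross, prod_eq_smul_add_smul x, prod_eq_smul_add_smul y]
  simp only [map_add, map_smul, cross, Prod.fst_add, Prod.snd_add, Prod.smul_fst, Prod.smul_snd,
    smul_eq_mul]
  ring

lemma cross_smul_right (c : F) (x y : F × F) : cross x (c • y) = c * cross x y := by
  simp [cross]; ring

lemma cross_smul_sub_cross_smul (a b n : F × F) :
    cross a n • b - cross b n • a = cross a b • n := by
  ext <;> simp [cross] <;> ring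

lemma exists_cross_eq {n : F × F} (hn : n ≠ 0) (k : F) : ∃ u, cross u n = k := by
  by_cases h : n.2 = 0
  · have h1 : n.1 ≠ 0 := fun h1 => hn (Prod.ext h1 h)
    exact ⟨(0, -k / n.1), by simp [cross, h1]⟩
  · exact ⟨(k / n.2, 0), by simp [cross, h]⟩

lemma exists_eq_smul_of_cross_eq_zero {n v : F × F} (hn : n ≠ 0) (h : cross v n = 0) :
    ∃ t : F, v = t • n := by
  unfold cross at h
  by_cases h2 : n.2 = 0
  · have h1 : n.1 ≠ 0 := fun h1 => hn (Prod.ext h1 h2)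
    refine ⟨v.1 / n.1, Prod.ext (by simp [h1]) ?_⟩
    simp only [Prod.smul_snd, smul_eq_mul]
    field_simp
    linear_combination -h
  · refine ⟨v.2 / n.2, Prod.ext ?_ (by simp [h2])⟩
    simp only [Prod.smul_fst, smul_eq_mul]
    field_simp
    linear_combination h

lemma AlgIso.symm {m₁ m₂ : F × F → F × F → F × F} (h : AlgIso m₁ m₂) : AlgIso m₂ m₁ := by
  obtain ⟨g, hg⟩ := h
  refine ⟨g.symm, fun x y => g.injective ?_⟩
  simp [hg]

lemma AlgIso.trans {m₁ m₂ m₃ : F × F → F × F → F × F} (h : AlgIso m₁ m₂) (h' : AlgIso m₂ m₃) :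
    AlgIso m₁ m₃ := by
  obtain ⟨g, hg⟩ := h
  obtain ⟨g', hg'⟩ := h'
  exact ⟨g.trans g', fun x y => by simp [hg, hg']⟩

lemma IsBilinearMul.eq_scMul {m : F × F → F × F → F × F} (hm : IsBilinearMul m) :
    m = scMul (m (1, 0) (1, 0)).1 (m (1, 0) (0, 1)).1 (m (0, 1) (1, 0)).1 (m (0, 1) (0, 1)).1
      (m (1, 0) (1, 0)).2 (m (1, 0) (0, 1)).2 (m (0, 1) (1, 0)).2 (m (0, 1) (0, 1)).2 := by
  obtain ⟨hl, hr⟩ := hm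
  have hl0 (y : F × F) : m 0 y = 0 := by simpa using hl 1 0 0 y
  have hr0 (x : F × F) : m x 0 = 0 := by simpa using hr 1 x 0 0
  let B : F × F →ₗ[F] F × F →ₗ[F] F × F := LinearMap.mk₂ F m
    (fun x x' y => by simpa using hl 1 x x' y) (fun a x y => by simpa [hl0] using hl a x 0 y)
    (fun x y y' => by simpa using hr 1 x y y') (fun a x y => by simpa [hr0] using hr a x y 0)
  funext x y
  change B x y = _
  rw [prod_eq_smul_add_smul x, prod_eq_smul_add_smul y]
  simp only [map_add, map_smul, LinearMap.add_apply, LinearMap.smul_apply]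
  ext <;> simp [B, scMul] <;> ring

def curledMul (n v x y : F × F) : F × F :=
  cross x n • y + cross y n • x + cross x y • v

lemma curledMul_self (n v x : F × F) : curledMul n v x x = (2 * cross x n) • x := by
  ext <;> simp [curledMul, cross] <;> ring

lemma curledMul_sub_swap (n v x y : F × F) :
    curledMul n v x y - curledMul n v y x = (2 * cross x y) • v := by
  ext <;> simp [curledMul, cross] <;> ring

lemma curledMul_curledMul_self (n v x y : F × F) :
    curledMul n v (curledMul n v x y) (curledMul n v x y) =
      curledMul n v (curledMul n v x x) (curledMul n v y y)
        + (2 * cross x y * cross v n) • curledMul n v x y := by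
  ext <;> simp [curledMul, cross] <;> ring

lemma scMul_eq_curledMul_of_isCurled (h2 : (2 : F) ≠ 0) {a1 a2 a3 a4 b1 b2 b3 b4 : F}
    (h : IsCurled (scMul a1 a2 a3 a4 b1 b2 b3 b4)) :
    scMul a1 a2 a3 a4 b1 b2 b3 b4 =
      curledMul (-(a2 + a3) / 2, a1 / 2) ((a2 - a3) / 2, b2 - a1 / 2) := by
  obtain ⟨l₁, h₁⟩ := h (1, 0)
  obtain ⟨l₂, h₂⟩ := h (0, 1)
  obtain ⟨l₃, h₃⟩ := h (1, 1)
  obtain ⟨l₄, h₄⟩ := h (1, -1)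
  simp only [scMul, Prod.ext_iff, Prod.smul_mk, smul_eq_mul] at h₁ h₂ h₃ h₄
  have hb1 : b1 = 0 := by linear_combination h₁.2
  have ha4 : a4 = 0 := by linear_combination h₂.1
  have hb4 : b4 = a2 + a3 := by
    apply mul_left_cancel₀ h2
    linear_combination h₃.2 - h₃.1 + h₄.1 + h₄.2 - 2 * hb1
  have hb3 : b3 = a1 - b2 := by linear_combination h₃.2 - h₃.1 - hb1 - hb4 + ha4
  subst hb1 ha4 hb4 hb3
  funext x y
  ext <;> simp [scMul, curledMul, cross] <;> field_simp <;> ring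

lemma exists_eq_curledMul (h2 : (2 : F) ≠ 0) {m : F × F → F × F → F × F} (hbil : IsBilinearMul m)
    (hcur : IsCurled m) : ∃ n v, m = curledMul n v := by
  rw [hbil.eq_scMul] at hcur ⊢
  exact ⟨_, _, scMul_eq_curledMul_of_isCurled h2 hcur⟩

lemma cross_eq_zero_of_isEndoCommutative (h2 : (2 : F) ≠ 0) {n v : F × F}
    (h : IsEndoCommutative (curledMul n v)) : cross v n = 0 := by
  have defect (x y : F × F) : (2 * cross x y * cross v n) • curledMul n v x y = 0 := by
    simpa [h x y] using curledMul_curledMul_self n v x y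
  have e₁₂ : cross ((1 : F), (0 : F)) (0, 1) = 1 := by simp [cross]
  have e₂₁ : cross ((0 : F), (1 : F)) (1, 0) = -1 := by simp [cross]
  by_contra hc
  have h12 : curledMul n v (1, 0) (0, 1) = 0 := by
    simpa [e₁₂, h2, hc] using defect (1, 0) (0, 1)
  have h21 : curledMul n v (0, 1) (1, 0) = 0 := by
    simpa [e₂₁, h2, hc] using defect (0, 1) (1, 0)
  have hv : (2 : F) • v = 0 := by
    simpa [h12, h21, e₁₂] using (curledMul_sub_swap n v (1, 0) (0, 1)).symm
  simp [(smul_eq_zero.mp hv).resolve_left h2, cross] at hc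

lemma cross_map_eq_of_map_eq_det_smul {g : (F × F) ≃ₗ[F] F × F} {n n' : F × F}
    (hn : g n = LinearMap.det (g : F × F →ₗ[F] F × F) • n') (x : F × F) :
    cross (g x) n' = cross x n := by
  apply mul_left_cancel₀ g.isUnit_det'.ne_zero
  rw [← cross_smul_right, ← hn]
  exact cross_map_map (g : F × F →ₗ[F] F × F) x n

lemma algIso_curledMul_iff (h2 : (2 : F) ≠ 0) {n v n' v' : F × F} :
    AlgIso (curledMul n v) (curledMul n' v') ↔ ∃ g : (F × F) ≃ₗ[F] F × F,
      g n = LinearMap.det (g : F × F →ₗ[F] F × F) • n' ∧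
        g v = LinearMap.det (g : F × F →ₗ[F] F × F) • v' := by
  constructor
  · rintro ⟨g, hg⟩
    set D := LinearMap.det (g : F × F →ₗ[F] F × F)
    have hdet (x y : F × F) : cross (g x) (g y) = D * cross x y := cross_map_map _ x y
    have e₁₂ : cross ((1 : F), (0 : F)) (0, 1) = 1 := by simp [cross]
    have hcross (x : F × F) : cross (g x) n' = cross x n := by
      by_cases hx : x = 0
      · simp [hx, cross]
      have h := hg x x
      rw [curledMul_self, curledMul_self, map_smul, ← sub_eq_zero, ← sub_smul] at h
      have h' := (smul_eq_zero.mp h).resolve_right (by simpa using hx)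
      exact (mul_left_cancel₀ h2 (sub_eq_zero.mp h')).symm
    refine ⟨g, ?_, ?_⟩
    · calc g n = g (cross (1, 0) n • (0, 1) - cross (0, 1) n • (1, 0)) := by
            rw [cross_smul_sub_cross_smul, e₁₂, one_smul]
        _ = cross (g (1, 0)) n' • g (0, 1) - cross (g (0, 1)) n' • g (1, 0) := by
            simp only [map_sub, map_smul, hcross]
        _ = D • n' := by rw [cross_smul_sub_cross_smul, hdet, e₁₂, mul_one]
    · have h := congrArg g (curledMul_sub_swap n v (1, 0) (0, 1))
      rw [map_sub, hg, hg, curledMul_sub_swap, hdet, e₁₂, map_smul, mul_one, mul_one, mul_smul] at h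
      exact (smul_right_injective _ h2 h).symm
  · rintro ⟨g, hn, hv⟩
    refine ⟨g, fun x y => ?_⟩
    have hdet : cross (g x) (g y) = LinearMap.det (g : F × F →ₗ[F] F × F) * cross x y :=
      cross_map_map _ x y
    simp only [curledMul, map_add, map_smul, hv, cross_map_eq_of_map_eq_det_smul hn, hdet,
      smul_smul, mul_comm]

lemma exists_linearEquiv_map_eq_det_smul {n : F × F} (hn : n ≠ 0) {k : F} (hk : k ≠ 0) :
    ∃ g : (F × F) ≃ₗ[F] F × F, g (0, k) = LinearMap.det (g : F × F →ₗ[F] F × F) • n := by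
  obtain ⟨u, hu⟩ := exists_cross_eq hn k
  let g : F × F →ₗ[F] F × F :=
    (LinearMap.fst F F F).smulRight u + (LinearMap.snd F F F).smulRight n
  have hdet : LinearMap.det g = k := by simp [det_eq_cross, g, hu]
  refine ⟨g.equivOfDetNeZero (hdet ▸ hk), ?_⟩
  change g (0, k) = LinearMap.det g • n
  simp [g, hdet]

lemma ecCurledFamily_some (h2 : (2 : F) ≠ 0) (a : F) :
    ecCurledFamily (some a) = curledMul (0, a / 2) (0, 3 * a / 2 - 1) := by
  funext x y
  ext <;> simp [ecCurledFamily, scMul, curledMul, cross] <;> field_simp <;> ring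

lemma ecCurledFamily_none (h2 : (2 : F) ≠ 0) (h3 : (3 : F) ≠ 0) :
    ecCurledFamily none = curledMul ((0 : F), (1 / 6 : F)) ((3 : F) • (0, 1 / 6)) := by
  have h6 : (6 : F) ≠ 0 := by
    rw [show (6 : F) = 2 * 3 by norm_num]; exact mul_ne_zero h2 h3
  funext x y
  ext <;> simp [ecCurledFamily, scMul, curledMul, cross] <;> field_simp <;> ring

lemma exists_algIso_ecCurledFamily (h2 : (2 : F) ≠ 0) (h3 : (3 : F) ≠ 0) {n v : F × F}
    (hnv : cross v n = 0) (hne : n ≠ 0 ∨ v ≠ 0) :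
    ∃ i, AlgIso (curledMul n v) (ecCurledFamily i) := by
  by_cases hn : n = 0
  · subst hn
    obtain ⟨g, hg⟩ := exists_linearEquiv_map_eq_det_smul (hne.resolve_left (not_not.2 rfl))
      (neg_ne_zero.2 (one_ne_zero (α := F)))
    refine ⟨some 0, ?_⟩
    rw [ecCurledFamily_some h2]
    exact ((algIso_curledMul_iff h2).2 ⟨g, by simp, by simpa using hg⟩).symm
  obtain ⟨t, rfl⟩ := exists_eq_smul_of_cross_eq_zero hn hnv
  suffices ∃ i, ∃ k : F, k ≠ 0 ∧ ecCurledFamily i = curledMul (0, k) (t • (0, k)) by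
    obtain ⟨i, k, hk, hi⟩ := this
    obtain ⟨g, hg⟩ := exists_linearEquiv_map_eq_det_smul hn hk
    exact ⟨i, hi ▸ ((algIso_curledMul_iff h2).2 ⟨g, hg, by rw [map_smul, hg, smul_comm]⟩).symm⟩
  by_cases ht : t = 3
  · have h6 : (6 : F) ≠ 0 := by
      rw [show (6 : F) = 2 * 3 by norm_num]; exact mul_ne_zero h2 h3
    exact ⟨none, 1 / 6, one_div_ne_zero h6, ht ▸ ecCurledFamily_none h2 h3⟩
  · have h3t : 3 - t ≠ 0 := sub_ne_zero.2 (Ne.symm ht)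
    refine ⟨some (2 / (3 - t)), 1 / (3 - t), by simpa using h3t, ?_⟩
    rw [ecCurledFamily_some h2]
    congr 1
    · ext <;> simp
      field_simp
    · ext <;> simp
      field_simp
      ring

lemma AlgIso.curledMul_eq_zero_iff (h2 : (2 : F) ≠ 0) {n v n' v' : F × F}
    (h : AlgIso (curledMul n v) (curledMul n' v')) : n = 0 ↔ n' = 0 := by
  obtain ⟨g, hn, -⟩ := (algIso_curledMul_iff h2).1 h
  rw [← g.map_eq_zero_iff, hn, smul_eq_zero, or_iff_right g.isUnit_det'.ne_zero]

lemma AlgIso.eq_smul_of_curledMul_smul (h2 : (2 : F) ≠ 0) {n n' v' : F × F} {t : F}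
    (h : AlgIso (curledMul n (t • n)) (curledMul n' v')) : v' = t • n' := by
  obtain ⟨g, hn, hv⟩ := (algIso_curledMul_iff h2).1 h
  apply smul_right_injective _ g.isUnit_det'.ne_zero
  dsimp only
  rw [← hv, map_smul, hn, smul_comm]

lemma not_algIso_ecCurledFamily_none_some (h2 : (2 : F) ≠ 0) (h3 : (3 : F) ≠ 0) (b : F) :
    ¬ AlgIso (ecCurledFamily none) (ecCurledFamily (some b)) := by
  intro h
  rw [ecCurledFamily_none h2 h3, ecCurledFamily_some h2] at h
  have := congrArg Prod.snd (h.eq_smul_of_curledMul_smul h2)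
  simp only [Prod.smul_snd, smul_eq_mul] at this
  exact one_ne_zero (by linear_combination -this)

lemma ecCurledFamily_some_injective (h2 : (2 : F) ≠ 0) {a b : F}
    (h : AlgIso (ecCurledFamily (some a)) (ecCurledFamily (some b))) : a = b := by
  rw [ecCurledFamily_some h2, ecCurledFamily_some h2] at h
  by_cases ha : a = 0
  · subst ha
    have := congrArg Prod.snd ((h.curledMul_eq_zero_iff h2).1 (by simp))
    exact (by simpa [h2] using this : b = 0).symm
  have hv : ((0 : F), 3 * a / 2 - 1) = (3 - 2 / a) • (0, a / 2) := by
    ext <;> simp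
    field_simp
  rw [hv] at h
  have := congrArg Prod.snd (h.eq_smul_of_curledMul_smul h2)
  simp only [Prod.smul_snd, smul_eq_mul] at this
  field_simp at this
  apply mul_left_cancel₀ h2
  linear_combination -this

lemma ecCurledFamily_injective (h2 : (2 : F) ≠ 0) (h3 : (3 : F) ≠ 0) {i j : Option F}
    (h : AlgIso (ecCurledFamily i) (ecCurledFamily j)) : i = j := by
  rcases i with _ | a <;> rcases j with _ | b
  · rfl
  · exact absurd h (not_algIso_ecCurledFamily_none_some h2 h3 b)
  · exact absurd h.symm (not_algIso_ecCurledFamily_none_some h2 h3 a)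
  · rw [ecCurledFamily_some_injective h2 h]

end

/-- any nonzero bilinear endo-commutative curled multiplication on
`F × F` (char F ≠ 2, 3) is isomorphic to exactly one member of `ecCurledFamily`,
and the members of `ecCurledFamily` are pairwise non-isomorphic. -/
theorem stmt_16 {F : Type*} [Field F] (h2 : ringChar F ≠ 2) (h3 : ringChar F ≠ 3)
    (m : F × F → F × F → F × F) (hbil : IsBilinearMul m)
    (hnz : ¬ ∀ x y, m x y = 0)
    (hec : ∀ x y : F × F, m (m x x) (m y y) = m (m x y) (m x y))
    (hcur : IsCurled m) :
    (∃! i : Option F, AlgIso m (ecCurledFamily i)) ∧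
      ∀ i j : Option F, i ≠ j → ¬ AlgIso (ecCurledFamily i) (ecCurledFamily j) := by
  have h2F : (2 : F) ≠ 0 := Ring.two_ne_zero h2
  have h3F : (3 : F) ≠ 0 := fun h =>
    h3 (CharP.ringChar_of_prime_eq_zero Nat.prime_three (by exact_mod_cast h))
  obtain ⟨n, v, rfl⟩ := exists_eq_curledMul h2F hbil hcur
  have hne : n ≠ 0 ∨ v ≠ 0 := by
    by_contra! h
    exact hnz fun x y => by simp [h, curledMul, cross]
  obtain ⟨i, hi⟩ := exists_algIso_ecCurledFamily h2F h3F
    (cross_eq_zero_of_isEndoCommutative h2F hec) hne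
  exact ⟨⟨i, hi, fun j hj => ecCurledFamily_injective h2F h3F (hj.symm.trans hi)⟩,
    fun i j hij h => hij (ecCurledFamily_injective h2F h3F h)⟩
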